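/- arXiv:2411.19826 — 2 statements merged into one kernel-verified Lean document; each statement's English description precedes it below -/
import Mathlib

section
/- Let K be a cap with rotation angle ω ∈ (0, π/2]. Then the following are equivalent: (1) N(K) ⊆ K; (2) N(K) ⊆ K \ δK; (3) for every t ∈ (0, ω), either x_K(t) is not in the interior of F_ω or x_K(t) ∈ K; (4) the set K \ N(K) is connected. -/
noncomputable section

open Real MeasureTheory Set Filter Topology

abbrev Pt := EuclideanSpace ℝ (Fin 2)

def mk2 (x y : ℝ) : Pt := (WithLp.equiv 2 (Fin 2 → ℝ)).symm ![x, y]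

def dotp (p q : Pt) : ℝ := p 0 * q 0 + p 1 * q 1

def uvec (t : ℝ) : Pt := mk2 (Real.cos t) (Real.sin t)

def vvec (t : ℝ) : Pt := mk2 (-Real.sin t) (Real.cos t)

def suppFn (K : Set Pt) (t : ℝ) : ℝ := sSup ((fun p => dotp p (uvec t)) '' K)

def suppLine (K : Set Pt) (t : ℝ) : Set Pt := {p | dotp p (uvec t) = suppFn K t}

def edge (K : Set Pt) (t : ℝ) : Set Pt := K ∩ suppLine K t

def vplus (K : Set Pt) (t : ℝ) : Pt :=
  suppFn K t • uvec t + sSup ((fun p => dotp p (vvec t)) '' edge K t) • vvec t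

def vminus (K : Set Pt) (t : ℝ) : Pt :=
  suppFn K t • uvec t + sInf ((fun p => dotp p (vvec t)) '' edge K t) • vvec t

def vinter (K : Set Pt) (a b : ℝ) : Pt :=
  mk2 ((suppFn K a * Real.sin b - suppFn K b * Real.sin a) / Real.sin (b - a))
      ((suppFn K b * Real.cos a - suppFn K a * Real.cos b) / Real.sin (b - a))

def IsConvexBody (K : Set Pt) : Prop := K.Nonempty ∧ IsCompact K ∧ Convex ℝ K

def Jset (ω : ℝ) : Set ℝ := Icc 0 ω ∪ Icc (π/2) (ω + π/2)

def IsCap (ω : ℝ) (K : Set Pt) : Prop :=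
  IsConvexBody K ∧
  suppFn K ω = 1 ∧ suppFn K (π/2) = 1 ∧
  suppFn K (ω + π) = 0 ∧ suppFn K (3*π/2) = 0 ∧
  K = ⋂ t ∈ Jset ω ∪ {ω + π, 3*π/2}, {p : Pt | dotp p (uvec t) ≤ suppFn K t}

def polyAngles (ω : ℝ) (Θ : Finset ℝ) : Set ℝ :=
  ↑Θ ∪ (fun s => s + π/2) '' ↑Θ ∪ {ω, π/2, ω + π, 3*π/2}

def IsPolyCap (ω : ℝ) (Θ : Finset ℝ) (K : Set Pt) : Prop :=
  IsCap ω K ∧ K = ⋂ t ∈ polyAngles ω Θ, {p : Pt | dotp p (uvec t) ≤ suppFn K t}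

def Qminus (K : Set Pt) (t : ℝ) : Set Pt :=
  {p | dotp p (uvec t) < suppFn K t - 1 ∧ dotp p (uvec (t + π/2)) < suppFn K (t + π/2) - 1}

def Qplus (K : Set Pt) (t : ℝ) : Set Pt :=
  {p | dotp p (uvec t) ≤ suppFn K t ∧ dotp p (uvec (t + π/2)) ≤ suppFn K (t + π/2)}

def hallway (S : Set Pt) (t : ℝ) : Set Pt := Qplus S t \ Qminus S t

def fan (ω : ℝ) : Set Pt := {p | 0 ≤ dotp p (uvec ω) ∧ 0 ≤ dotp p (uvec (π/2))}

def parall (ω : ℝ) : Set Pt :=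
  {p | dotp p (uvec (π/2)) ∈ Icc (0:ℝ) 1 ∧ dotp p (uvec ω) ∈ Icc (0:ℝ) 1}

def innerCorner (K : Set Pt) (t : ℝ) : Pt :=
  (suppFn K t - 1) • uvec t + (suppFn K (t + π/2) - 1) • vvec t

def outerCorner (K : Set Pt) (t : ℝ) : Pt :=
  suppFn K t • uvec t + suppFn K (t + π/2) • vvec t

def wedge (ω : ℝ) (K : Set Pt) (t : ℝ) : Set Pt := fan ω ∩ Qminus K t

def niche (ω : ℝ) (K : Set Pt) : Set Pt := fan ω ∩ ⋃ t ∈ Ioo 0 ω, Qminus K t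

def polyNiche (ω : ℝ) (Θ : Finset ℝ) (K : Set Pt) : Set Pt :=
  parall ω ∩ ⋃ t ∈ Θ, Qminus K t

def upperBoundary (ω : ℝ) (K : Set Pt) : Set Pt := ⋃ t ∈ Icc 0 (ω + π/2), edge K t

def area (X : Set Pt) : ℝ := (volume X).toReal

def Wpt (K : Set Pt) (t : ℝ) : Pt := mk2 ((suppFn K t - 1) / Real.cos t) 0

def Zpt (ω : ℝ) (K : Set Pt) (t : ℝ) : Pt :=
  ((suppFn K (t + π/2) - 1) / Real.sin (t + π/2 - ω)) • vvec ω

def wgap (K : Set Pt) (t : ℝ) : ℝ := dotp (vminus K 0 - Wpt K t) (uvec 0)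

def zgap (ω : ℝ) (K : Set Pt) (t : ℝ) : ℝ := dotp (vplus K (ω + π/2) - Zpt ω K t) (vvec ω)

def wgapInf (ω : ℝ) (K : Set Pt) : ℝ := sInf (wgap K '' Ioo 0 ω)

def zgapInf (ω : ℝ) (K : Set Pt) : ℝ := sInf (zgap ω K '' Ioo 0 ω)

def fplus (K : Set Pt) (t : ℝ) : ℝ := dotp (outerCorner K t - vplus K t) (vvec t)
def fminus (K : Set Pt) (t : ℝ) : ℝ := dotp (outerCorner K t - vminus K t) (vvec t)
def gplus (K : Set Pt) (t : ℝ) : ℝ := dotp (outerCorner K t - vplus K (t + π/2)) (uvec t)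
def gminus (K : Set Pt) (t : ℝ) : ℝ := dotp (outerCorner K t - vminus K (t + π/2)) (uvec t)

def oPt (ω : ℝ) : Pt := mk2 (Real.tan (π/4 - ω/2)) 1

def hplane (c : Bool) (t h : ℝ) : Set Pt :=
  if c then {p | dotp p (uvec t) ≤ h} else {p | dotp p (uvec t) < h}

/-!
Write `g_p(s) = h_K(s) - p·u_s` for the support function of `K - p`; it inherits the
sublinearity `sin(b-a) g(m) ≤ sin(b-m) g(a) + sin(m-a) g(b)`. For `p` in the fan,
`g_p(ω), g_p(π/2) ≤ 1`, so sublinearity propagates `g_p(t), g_p(t+π/2) > 1` (that is,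
`p ∈ Q⁻(t)`) to `g_p > 0` on `[0,t] ∪ [t+π/2, ω+π/2]`, while on `[t, t+π/2]` the inner corner
`x_K(t)` dominates `p`. Hence a niche point violates no constraint of `K` and lies on no edge as
soon as the corners `x_K(t)` that lie in the interior of the fan belong to `K`; and such corners
are limits of niche points, so they lie in `K` when the niche does.

Every point of `K \ N(K)` moves upwards inside `K \ N(K)` until it reaches `δK`, which is
connected, being a union of segments `e_K(s)` with compact graph over `s ∈ [0, ω+π/2]`.
Conversely, a corner `x_K(t) ∉ K` in the fan splits `K \ N(K)` into the closed pieces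
`{p·u_t ≥ h_K(t) - 1}` and `{p·u_{t+π/2} ≥ h_K(t+π/2) - 1}`, containing `e_K(0)` and
`e_K(ω+π/2)` respectively, which can only meet beyond `x_K(t)`, outside `K`.
-/

theorem IsConnected.biUnion_of_isCompact_graph {Y X : Type*} [TopologicalSpace Y] [T2Space Y]
    [TopologicalSpace X] {S : Set Y} {E : Y → Set X} (hS : IsConnected S)
    (hE : ∀ y ∈ S, IsConnected (E y)) (hG : IsCompact {z : Y × X | z.1 ∈ S ∧ z.2 ∈ E z.1}) :
    IsConnected (⋃ y ∈ S, E y) := by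
  set G := {z : Y × X | z.1 ∈ S ∧ z.2 ∈ E z.1}
  have : CompactSpace G := isCompact_iff_compactSpace.1 hG
  have : ConnectedSpace S := isConnected_iff_connectedSpace.1 hS
  -- The projection of the graph onto `S` is a quotient map (compact onto Hausdorff) with
  -- connected fibres `{y} × E y`.
  let f : G → S := fun z => ⟨z.1.1, z.2.1⟩
  have hf : Topology.IsQuotientMap f := by
    refine .of_surjective_continuous (fun y => ?_) (by fun_prop)
    obtain ⟨x, hx⟩ := (hE y y.2).nonempty
    exact ⟨⟨(y, x), y.2, hx⟩, rfl⟩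
  have hfib : ∀ y : S, IsConnected (f ⁻¹' {y}) := by
    intro y
    have himg : Subtype.val '' (f ⁻¹' {y}) = {y.1} ×ˢ E y := by
      ext ⟨a, x⟩
      simp only [mem_ofPred_eq, mem_image, mem_preimage, mem_singleton_iff, Subtype.ext_iff,
        Subtype.exists, exists_and_left, exists_prop, exists_eq_right_right, mem_prod,
        and_congr_right_iff, G, f]
      rintro rfl
      exact ⟨And.right, fun hx => ⟨y.2, hx⟩⟩
    have hc := (isConnected_singleton (x := y.1)).prod (hE y y.2)
    rw [← himg] at hc
    exact ⟨image_nonempty.1 hc.nonempty, Topology.IsInducing.subtypeVal.isPreconnected_image.1 hc.2⟩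
  have hconn := hf.isCoinducing.isConnected_preimage_of_isClosed hfib isClosed_univ isConnected_univ
  convert hconn.image _ (continuous_snd.comp continuous_subtype_val).continuousOn using 1
  ext x
  simp [G]

section Frame

theorem dotp_add_left (p q r : Pt) : dotp (p + q) r = dotp p r + dotp q r := by
  simp only [dotp, PiLp.add_apply]; ring

theorem dotp_sub_left (p q r : Pt) : dotp (p - q) r = dotp p r - dotp q r := by
  simp only [dotp, PiLp.sub_apply]; ring

theorem dotp_smul_left (c : ℝ) (p q : Pt) : dotp (c • p) q = c * dotp p q := by
  simp only [dotp, PiLp.smul_apply, smul_eq_mul]; ring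

theorem dotp_uvec_uvec (a b : ℝ) : dotp (uvec a) (uvec b) = cos (a - b) := by
  simp only [dotp, uvec, mk2, WithLp.equiv_symm_apply, Matrix.cons_val_zero, Matrix.cons_val_one,
    cos_sub]

theorem vvec_eq_uvec (t : ℝ) : vvec t = uvec (t + π/2) := by
  simp only [vvec, uvec, cos_add_pi_div_two, sin_add_pi_div_two]

theorem dotp_uvec_add_pi (p : Pt) (x : ℝ) : dotp p (uvec (x + π)) = -dotp p (uvec x) := by
  simp only [dotp, uvec, mk2, WithLp.equiv_symm_apply, Matrix.cons_val_zero, Matrix.cons_val_one,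
    cos_add_pi, sin_add_pi]
  ring

theorem dotp_uvec_eq_cos_add_sin (p : Pt) (t s : ℝ) :
    dotp p (uvec s) = cos (s - t) * dotp p (uvec t) + sin (s - t) * dotp p (uvec (t + π/2)) := by
  simp only [dotp, uvec, mk2, WithLp.equiv_symm_apply, Matrix.cons_val_zero, Matrix.cons_val_one,
    cos_add_pi_div_two, sin_add_pi_div_two, cos_sub, sin_sub]
  linear_combination (-(p 0 * cos s + p 1 * sin s)) * sin_sq_add_cos_sq t

theorem sin_sub_mul_dotp_uvec (p : Pt) (a m b : ℝ) :
    sin (b - a) * dotp p (uvec m) =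
      sin (b - m) * dotp p (uvec a) + sin (m - a) * dotp p (uvec b) := by
  simp only [dotp, uvec, mk2, WithLp.equiv_symm_apply, Matrix.cons_val_zero, Matrix.cons_val_one,
    sin_sub]
  ring

theorem continuous_dotp_uvec : Continuous fun x : ℝ × Pt => dotp x.2 (uvec x.1) := by
  simp only [dotp, uvec, mk2, WithLp.equiv_symm_apply, Matrix.cons_val_zero, Matrix.cons_val_one]
  fun_prop

theorem continuous_dotp_uvec_left (s : ℝ) : Continuous fun p : Pt => dotp p (uvec s) :=
  continuous_dotp_uvec.comp (.prodMk_right s)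

theorem continuous_dotp_uvec_right (p : Pt) : Continuous fun s => dotp p (uvec s) :=
  continuous_dotp_uvec.comp (.prodMk_left p)

theorem dotp_uvec_pi_div_two (r : ℝ) : dotp (uvec (π/2)) (uvec r) = sin r := by
  rw [dotp_uvec_uvec, cos_pi_div_two_sub]

theorem dotp_innerCorner_uvec (K : Set Pt) (t : ℝ) :
    dotp (innerCorner K t) (uvec t) = suppFn K t - 1 := by
  simp [innerCorner, vvec_eq_uvec, dotp_add_left, dotp_smul_left, dotp_uvec_uvec]

theorem dotp_innerCorner_uvec_add (K : Set Pt) (t : ℝ) :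
    dotp (innerCorner K t) (uvec (t + π/2)) = suppFn K (t + π/2) - 1 := by
  simp [innerCorner, vvec_eq_uvec, dotp_add_left, dotp_smul_left, dotp_uvec_uvec]

variable {p q : Pt} {t s : ℝ}

theorem cos_sub_nonneg_and_sin_sub_nonneg (hs : s ∈ Icc t (t + π/2)) :
    0 ≤ cos (s - t) ∧ 0 ≤ sin (s - t) := by
  obtain ⟨h1, h2⟩ := hs
  exact ⟨cos_nonneg_of_mem_Icc ⟨by linarith [pi_pos], by linarith⟩,
    sin_nonneg_of_mem_Icc ⟨by linarith, by linarith [pi_pos]⟩⟩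

theorem dotp_uvec_le_of_le (hs : s ∈ Icc t (t + π/2))
    (h₁ : dotp p (uvec t) ≤ dotp q (uvec t))
    (h₂ : dotp p (uvec (t + π/2)) ≤ dotp q (uvec (t + π/2))) :
    dotp p (uvec s) ≤ dotp q (uvec s) := by
  obtain ⟨hc, hs⟩ := cos_sub_nonneg_and_sin_sub_nonneg hs
  rw [dotp_uvec_eq_cos_add_sin p t s, dotp_uvec_eq_cos_add_sin q t s]
  gcongr

theorem dotp_uvec_lt_of_lt (hs : s ∈ Icc t (t + π/2))
    (h₁ : dotp p (uvec t) < dotp q (uvec t))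
    (h₂ : dotp p (uvec (t + π/2)) < dotp q (uvec (t + π/2))) :
    dotp p (uvec s) < dotp q (uvec s) := by
  obtain ⟨hc, hs⟩ := cos_sub_nonneg_and_sin_sub_nonneg hs
  rw [dotp_uvec_eq_cos_add_sin p t s, dotp_uvec_eq_cos_add_sin q t s]
  rcases hc.lt_or_eq with hc | hc
  · nlinarith [mul_lt_mul_of_pos_left h₁ hc]
  · have hs : 0 < sin (s - t) := by nlinarith [sin_sq_add_cos_sq (s - t)]
    nlinarith [mul_lt_mul_of_pos_left h₂ hs]

end Frame

def suppGap (K : Set Pt) (p : Pt) (s : ℝ) : ℝ := suppFn K s - dotp p (uvec s)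

section Support

variable {K : Set Pt} {p : Pt} {s t : ℝ}

theorem dotp_le_suppFn (hK : IsCompact K) (hp : p ∈ K) (s : ℝ) : dotp p (uvec s) ≤ suppFn K s :=
  le_csSup (hK.image (continuous_dotp_uvec_left s)).bddAbove ⟨p, hp, rfl⟩

theorem suppFn_le_of_forall (hne : K.Nonempty) {c : ℝ} (h : ∀ p ∈ K, dotp p (uvec s) ≤ c) :
    suppFn K s ≤ c :=
  csSup_le (hne.image _) (forall_mem_image.2 h)

theorem continuous_suppFn (hK : IsCompact K) : Continuous (suppFn K) :=
  hK.continuous_sSup (f := fun s p => dotp p (uvec s)) continuous_dotp_uvec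

theorem edge_nonempty (hK : IsCompact K) (hne : K.Nonempty) (s : ℝ) : (edge K s).Nonempty := by
  obtain ⟨p, hp, hps⟩ :=
    (hK.image (continuous_dotp_uvec_left s)).sSup_mem (hne.image _)
  exact ⟨p, hp, hps⟩

theorem Convex.edge (hK : Convex ℝ K) (s : ℝ) : Convex ℝ (edge K s) := by
  refine hK.inter fun p hp q hq a b _ _ hab => ?_
  simp only [suppLine, mem_ofPred_eq, dotp_add_left, dotp_smul_left] at hp hq ⊢
  rw [hp, hq, ← add_mul, hab, one_mul]

theorem mem_Qminus_iff : p ∈ Qminus K t ↔ 1 < suppGap K p t ∧ 1 < suppGap K p (t + π/2) := by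
  simp only [Qminus, suppGap, mem_ofPred_eq]
  constructor <;> rintro ⟨h₁, h₂⟩ <;> constructor <;> linarith

theorem suppGap_eq_zero_of_mem_edge (hp : p ∈ edge K s) : suppGap K p s = 0 :=
  sub_eq_zero.2 hp.2.symm

theorem sin_sub_mul_suppGap_le (hK : IsCompact K) (hne : K.Nonempty) (p : Pt) {a m b : ℝ}
    (hbm : 0 ≤ sin (b - m)) (hma : 0 ≤ sin (m - a)) (hba : 0 < sin (b - a)) :
    sin (b - a) * suppGap K p m ≤ sin (b - m) * suppGap K p a + sin (m - a) * suppGap K p b := by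
  have hm : suppFn K m ≤ (sin (b - m) * suppFn K a + sin (m - a) * suppFn K b) / sin (b - a) := by
    refine suppFn_le_of_forall hne fun q hq => ?_
    rw [le_div_iff₀ hba, mul_comm, sin_sub_mul_dotp_uvec]
    gcongr <;> exact dotp_le_suppFn hK hq _
  rw [le_div_iff₀ hba] at hm
  simp only [suppGap]
  linarith [sin_sub_mul_dotp_uvec p a m b]

end Support

section Niche

variable {ω : ℝ} {K : Set Pt} {p : Pt} {s t : ℝ}

theorem mem_niche_iff : p ∈ niche ω K ↔ p ∈ fan ω ∧ ∃ t ∈ Ioo 0 ω, p ∈ Qminus K t := by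
  simp only [niche, mem_inter_iff, mem_iUnion, exists_prop]

theorem Jset_subset_Icc : Jset ω ⊆ Icc 0 (ω + π/2) :=
  union_subset (Icc_subset_Icc le_rfl (by linarith [pi_pos]))
    (Icc_subset_Icc (by linarith [pi_pos]) le_rfl)

theorem isCompact_Jset : IsCompact (Jset ω) := isCompact_Icc.union isCompact_Icc

theorem Icc_subset_Icc_union :
    Icc 0 (ω + π/2) ⊆ Icc t (t + π/2) ∪ (Icc 0 t ∪ Icc (t + π/2) (ω + π/2)) := by
  rintro s ⟨hs₀, hs₁⟩
  rcases le_total s t with hst | hts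
  · exact Or.inr (Or.inl ⟨hs₀, hst⟩)
  rcases le_total s (t + π/2) with hst' | hts'
  · exact Or.inl ⟨hts, hst'⟩
  · exact Or.inr (Or.inr ⟨hts', hs₁⟩)

theorem dotp_lt_dotp_innerCorner (hp : p ∈ Qminus K t) (hs : s ∈ Icc t (t + π/2)) :
    dotp p (uvec s) < dotp (innerCorner K t) (uvec s) :=
  dotp_uvec_lt_of_lt hs (by rw [dotp_innerCorner_uvec]; exact hp.1)
    (by rw [dotp_innerCorner_uvec_add]; exact hp.2)

theorem innerCorner_mem_interior_fan (hω : ω ≤ π/2) (ht : t ∈ Ioo 0 ω) (hpF : p ∈ fan ω)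
    (hp : p ∈ Qminus K t) : innerCorner K t ∈ interior (fan ω) := by
  set O := {x : Pt | 0 < dotp x (uvec ω) ∧ 0 < dotp x (uvec (π/2))}
  have hO : IsOpen O := (isOpen_lt continuous_const (continuous_dotp_uvec_left ω)).inter
    (isOpen_lt continuous_const (continuous_dotp_uvec_left (π/2)))
  have hOF : O ⊆ fan ω := fun x hx => ⟨hx.1.le, hx.2.le⟩
  refine interior_maximal hOF hO ⟨?_, ?_⟩
  · exact hpF.1.trans_lt (dotp_lt_dotp_innerCorner hp ⟨ht.2.le, by linarith [ht.1]⟩)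
  · exact hpF.2.trans_lt (dotp_lt_dotp_innerCorner hp ⟨by linarith [ht.2], by linarith [ht.1]⟩)

theorem innerCorner_mem_of_niche_subset (hK : IsClosed K) (h : niche ω K ⊆ K)
    (ht : t ∈ Ioo 0 ω) (hx : innerCorner K t ∈ interior (fan ω)) : innerCorner K t ∈ K := by
  set x := innerCorner K t
  let y : ℝ → Pt := fun d => x - d • (uvec t + uvec (t + π/2))
  have hy : Tendsto y (𝓝[>] 0) (𝓝 x) := by
    have : Continuous y := by fun_prop
    simpa [y] using (this.tendsto 0).mono_left nhdsWithin_le_nhds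
  refine hK.mem_of_tendsto hy ?_
  filter_upwards [hy.eventually (isOpen_interior.mem_nhds hx), self_mem_nhdsWithin]
    with d hdF hd
  refine h (mem_niche_iff.2 ⟨interior_subset hdF, t, ht, ?_, ?_⟩) <;>
  · simp [y, x, dotp_sub_left, dotp_smul_left, dotp_add_left, dotp_uvec_uvec,
      dotp_innerCorner_uvec, dotp_innerCorner_uvec_add]
    linarith [mem_Ioi.1 hd]

theorem mem_niche_of_add_smul_mem (hω : ω ≤ π/2) (hp : p ∈ fan ω) {μ : ℝ} (hμ : 0 ≤ μ)
    (h : p + μ • uvec (π/2) ∈ niche ω K) : p ∈ niche ω K := by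
  obtain ⟨-, t, ht, h₁, h₂⟩ := mem_niche_iff.1 h
  rw [dotp_add_left, dotp_smul_left, dotp_uvec_pi_div_two] at h₁ h₂
  rw [sin_add_pi_div_two] at h₂
  have hsin : 0 ≤ sin t := sin_nonneg_of_mem_Icc ⟨ht.1.le, by linarith [ht.2, pi_pos]⟩
  have hcos : 0 ≤ cos t := cos_nonneg_of_mem_Icc ⟨by linarith [ht.1, pi_pos], by linarith [ht.2]⟩
  exact mem_niche_iff.2 ⟨hp, t, ht, by nlinarith, by nlinarith⟩

end Niche

namespace IsCap

variable {ω : ℝ} {K : Set Pt} {p q : Pt} {s t : ℝ}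

theorem isCompact (hK : IsCap ω K) : IsCompact K := hK.1.2.1

theorem nonempty (hK : IsCap ω K) : K.Nonempty := hK.1.1

theorem convex (hK : IsCap ω K) : Convex ℝ K := hK.1.2.2

theorem subset_fan (hK : IsCap ω K) : K ⊆ fan ω := by
  intro p hp
  have h₁ := dotp_le_suppFn hK.isCompact hp (ω + π)
  have h₂ := dotp_le_suppFn hK.isCompact hp (π/2 + π)
  rw [dotp_uvec_add_pi, hK.2.2.2.1] at h₁
  rw [dotp_uvec_add_pi, show π/2 + π = 3*π/2 by ring, hK.2.2.2.2.1] at h₂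
  exact ⟨by linarith, by linarith⟩

theorem mem_of_mem_fan (hK : IsCap ω K) (hp : p ∈ fan ω)
    (h : ∀ s ∈ Jset ω, dotp p (uvec s) ≤ suppFn K s) : p ∈ K := by
  obtain ⟨-, -, -, hωπ, h3π, hKeq⟩ := hK
  rw [hKeq]
  simp only [mem_iInter, mem_union, mem_insert_iff, mem_singleton_iff, mem_ofPred_eq]
  rintro s (hs | rfl | rfl)
  · exact h s hs
  · rw [dotp_uvec_add_pi, hωπ]; linarith [hp.1]
  · rw [h3π, show 3*π/2 = π/2 + π by ring, dotp_uvec_add_pi]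
    linarith [hp.2]

theorem sin_mul_suppGap_le_left (hK : IsCap ω K) (hω : ω ≤ π/2) (hp : p ∈ fan ω)
    (hs : 0 ≤ s) (hst : s ≤ t) (htω : t < ω) :
    sin (ω - s) * (suppGap K p t - 1) ≤ sin (ω - t) * suppGap K p s := by
  have hts : 0 ≤ sin (t - s) := sin_nonneg_of_mem_Icc ⟨by linarith, by linarith [pi_pos]⟩
  have hcombo := sin_sub_mul_suppGap_le hK.isCompact hK.nonempty p (a := s) (m := t) (b := ω)
    (sin_nonneg_of_mem_Icc ⟨by linarith, by linarith [pi_pos]⟩) hts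
    (sin_pos_of_pos_of_lt_pi (by linarith) (by linarith [pi_pos]))
  have hgω : suppGap K p ω ≤ 1 := by
    simp only [suppGap, hK.2.1]; linarith [hp.1]
  have hmono : sin (t - s) ≤ sin (ω - s) :=
    sin_le_sin_of_le_of_le_pi_div_two (by linarith [pi_pos]) (by linarith) (by linarith)
  nlinarith [mul_le_of_le_one_right hts hgω]

theorem sin_mul_suppGap_le_right (hK : IsCap ω K) (hω : ω ≤ π/2) (hp : p ∈ fan ω)
    (ht : 0 < t) (hts : t + π/2 ≤ s) (hs : s ≤ ω + π/2) :
    sin (s - π/2) * (suppGap K p (t + π/2) - 1) ≤ sin t * suppGap K p s := by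
  have hst : 0 ≤ sin (s - (t + π/2)) :=
    sin_nonneg_of_mem_Icc ⟨by linarith, by linarith [pi_pos]⟩
  have hcombo := sin_sub_mul_suppGap_le hK.isCompact hK.nonempty p
    (a := π/2) (m := t + π/2) (b := s) hst
    (by rw [add_sub_cancel_right]; exact sin_nonneg_of_mem_Icc ⟨by linarith, by linarith⟩)
    (sin_pos_of_pos_of_lt_pi (by linarith) (by linarith [pi_pos]))
  rw [add_sub_cancel_right] at hcombo
  have hgπ : suppGap K p (π/2) ≤ 1 := by
    simp only [suppGap, hK.2.2.1]; linarith [hp.2]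
  have hmono : sin (s - (t + π/2)) ≤ sin (s - π/2) :=
    sin_le_sin_of_le_of_le_pi_div_two (by linarith [pi_pos]) (by linarith) (by linarith)
  nlinarith [mul_le_of_le_one_right hst hgπ]

theorem suppGap_pos (hK : IsCap ω K) (hω : ω ≤ π/2) (hp : p ∈ fan ω)
    (hq : p ∈ Qminus K t) (ht : t ∈ Ioo 0 ω) (hs : s ∈ Icc 0 t ∪ Icc (t + π/2) (ω + π/2)) :
    0 < suppGap K p s := by
  obtain ⟨h₁, h₂⟩ := mem_Qminus_iff.1 hq
  rcases hs with ⟨hs0, hst⟩ | ⟨hts, hsω⟩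
  · refine pos_of_mul_pos_right (lt_of_lt_of_le ?_
      (hK.sin_mul_suppGap_le_left hω hp hs0 hst ht.2)) (sin_nonneg_of_mem_Icc ?_)
    · exact mul_pos (sin_pos_of_pos_of_lt_pi (by linarith [ht.2]) (by linarith [pi_pos, hω]))
        (by linarith)
    · constructor <;> linarith [ht.2, pi_pos, hω]
  · refine pos_of_mul_pos_right (lt_of_lt_of_le ?_
      (hK.sin_mul_suppGap_le_right hω hp ht.1 hts hsω)) (sin_nonneg_of_mem_Icc ?_)
    · exact mul_pos (sin_pos_of_pos_of_lt_pi (by linarith [ht.1]) (by linarith [pi_pos, hω]))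
        (by linarith)
    · constructor <;> linarith [ht.1, ht.2, pi_pos, hω]

theorem suppGap_nonneg (hK : IsCap ω K) (hω : ω ≤ π/2) (hp : p ∈ fan ω)
    (h₁ : 1 ≤ suppGap K p t) (h₂ : 1 ≤ suppGap K p (t + π/2)) (ht : t ∈ Ioo 0 ω)
    (hs : s ∈ Icc 0 t ∪ Icc (t + π/2) (ω + π/2)) :
    0 ≤ suppGap K p s := by
  rcases hs with ⟨hs0, hst⟩ | ⟨hts, hsω⟩
  · refine nonneg_of_mul_nonneg_right (le_trans ?_
      (hK.sin_mul_suppGap_le_left hω hp hs0 hst ht.2))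
      (sin_pos_of_pos_of_lt_pi (by linarith [ht.2]) (by linarith [pi_pos, ht.1, hω]))
    exact mul_nonneg (sin_nonneg_of_mem_Icc ⟨by linarith [ht.2], by linarith [pi_pos, hω]⟩)
      (by linarith)
  · refine nonneg_of_mul_nonneg_right (le_trans ?_
      (hK.sin_mul_suppGap_le_right hω hp ht.1 hts hsω))
      (sin_pos_of_pos_of_lt_pi ht.1 (by linarith [pi_pos, ht.2, hω]))
    exact mul_nonneg (sin_nonneg_of_mem_Icc ⟨by linarith [ht.1], by linarith [pi_pos, hω]⟩)
      (by linarith)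

theorem suppGap_le_one_of_mem_edge_zero (hK : IsCap ω K) (hω : ω ∈ Ioc 0 (π/2))
    (hq : q ∈ edge K 0) (ht : t ∈ Ioo 0 ω) : suppGap K q t ≤ 1 := by
  have h := hK.sin_mul_suppGap_le_left hω.2 (hK.subset_fan hq.1) le_rfl ht.1.le ht.2
  rw [suppGap_eq_zero_of_mem_edge hq, mul_zero, sub_zero] at h
  have hω' : 0 < sin ω := sin_pos_of_pos_of_lt_pi hω.1 (by linarith [pi_pos, hω.2])
  nlinarith

theorem suppGap_le_one_of_mem_edge_top (hK : IsCap ω K) (hω : ω ∈ Ioc 0 (π/2))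
    (hq : q ∈ edge K (ω + π/2)) (ht : t ∈ Ioo 0 ω) : suppGap K q (t + π/2) ≤ 1 := by
  have h := hK.sin_mul_suppGap_le_right hω.2 (hK.subset_fan hq.1) ht.1 (by linarith [ht.2]) le_rfl
  rw [suppGap_eq_zero_of_mem_edge hq, mul_zero, add_sub_cancel_right] at h
  have hω' : 0 < sin ω := sin_pos_of_pos_of_lt_pi hω.1 (by linarith [pi_pos, hω.2])
  nlinarith

theorem niche_subset_diff_upperBoundary (hK : IsCap ω K) (hω : ω ≤ π/2)
    (h : ∀ t ∈ Ioo 0 ω, innerCorner K t ∉ interior (fan ω) ∨ innerCorner K t ∈ K) :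
    niche ω K ⊆ K \ upperBoundary ω K := by
  intro p hp
  obtain ⟨hpF, t, ht, hpQ⟩ := mem_niche_iff.1 hp
  have hx : innerCorner K t ∈ K :=
    (h t ht).resolve_left (not_not.2 (innerCorner_mem_interior_fan hω ht hpF hpQ))
  have hlt : ∀ s ∈ Icc 0 (ω + π/2), dotp p (uvec s) < suppFn K s := by
    intro s hs
    rcases Icc_subset_Icc_union hs with hmid | hout
    · exact (dotp_lt_dotp_innerCorner hpQ hmid).trans_le (dotp_le_suppFn hK.isCompact hx s)
    · exact sub_pos.1 (hK.suppGap_pos hω hpF hpQ ht hout)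
  refine ⟨hK.mem_of_mem_fan hpF fun s hs => (hlt s (Jset_subset_Icc hs)).le, ?_⟩
  simp only [upperBoundary, mem_iUnion, exists_prop, not_exists, not_and]
  exact fun s hs hps => (hlt s hs).ne hps.2

theorem notMem_niche_of_mem_edge (hK : IsCap ω K) (hω : ω ≤ π/2) {s : ℝ}
    (hs : s = 0 ∨ s = ω + π/2) (hq : q ∈ edge K s) : q ∉ niche ω K := by
  intro hqN
  obtain ⟨hqF, t, ht, hqQ⟩ := mem_niche_iff.1 hqN
  refine (hK.suppGap_pos hω hqF hqQ ht ?_).ne' (suppGap_eq_zero_of_mem_edge hq)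
  rcases hs with rfl | rfl
  · exact Or.inl ⟨le_rfl, ht.1.le⟩
  · exact Or.inr ⟨by linarith [ht.2], le_rfl⟩

theorem exists_suppFn_lt_dotp_innerCorner (hK : IsCap ω K) (hω : ω ≤ π/2)
    (ht : t ∈ Ioo 0 ω) (hxF : innerCorner K t ∈ fan ω) (hxK : innerCorner K t ∉ K) :
    ∃ s ∈ Icc t (t + π/2), suppFn K s < dotp (innerCorner K t) (uvec s) := by
  by_contra! h
  refine hxK (hK.mem_of_mem_fan hxF fun s hs => ?_)
  rcases Icc_subset_Icc_union (Jset_subset_Icc hs) with hmid | hout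
  · exact h s hmid
  · refine sub_nonneg.1 (hK.suppGap_nonneg hω hxF ?_ ?_ ht hout) <;>
      simp [suppGap, dotp_innerCorner_uvec, dotp_innerCorner_uvec_add]

theorem exists_add_smul_mem_upperBoundary (hK : IsCap ω K) (hω : ω ∈ Ioc 0 (π/2))
    (hp : p ∈ K) : ∃ κ : ℝ, 0 ≤ κ ∧ p + κ • uvec (π/2) ∈ upperBoundary ω K := by
  set e := uvec (π/2)
  set Λ := {κ : ℝ | 0 ≤ κ ∧ p + κ • e ∈ K}
  have hΛ : IsCompact Λ := by
    refine (isCompact_Icc (a := 0) (b := 1 - dotp p e)).of_isClosed_subset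
      (isClosed_Ici.inter (hK.isCompact.isClosed.preimage
        (continuous_const.add (continuous_id.smul continuous_const)))) fun κ hκ => ⟨hκ.1, ?_⟩
    have := dotp_le_suppFn hK.isCompact hκ.2 (π/2)
    rw [dotp_add_left, dotp_smul_left, dotp_uvec_pi_div_two, sin_pi_div_two, hK.2.2.1] at this
    linarith
  obtain ⟨κ, hκ, hκmax⟩ := hΛ.exists_isGreatest ⟨0, le_rfl, by simpa using hp⟩
  refine ⟨κ, hκ.1, ?_⟩
  set q := p + κ • e
  -- If the highest point `q` of `K` above `p` lay on no edge `e_K(s)`, `s ∈ J_ω`, the constraints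
  -- defining `K` would have slack at least `ε > 0` by compactness of `J_ω`, and `q + ε e ∈ K`.
  by_contra hq
  have hgap : ∀ s ∈ Jset ω, 0 < suppGap K q s := fun s hs =>
    sub_pos.2 ((dotp_le_suppFn hK.isCompact hκ.2 s).lt_of_ne
      fun hqs => hq (mem_iUnion₂.2 ⟨s, Jset_subset_Icc hs, hκ.2, hqs⟩))
  obtain ⟨s₀, hs₀, hmin⟩ := isCompact_Jset.exists_isMinOn
    ⟨0, Or.inl ⟨le_rfl, hω.1.le⟩⟩
    ((continuous_suppFn hK.isCompact).sub (continuous_dotp_uvec_right q)).continuousOn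
  set ε := suppGap K q s₀
  have hε := hgap s₀ hs₀
  have hqF := hK.subset_fan hκ.2
  have hup : ∀ r, dotp (q + ε • e) (uvec r) = dotp q (uvec r) + ε * sin r := fun r => by
    rw [dotp_add_left, dotp_smul_left, dotp_uvec_pi_div_two]
  have hnext : κ + ε ∈ Λ := by
    refine ⟨by linarith [hκ.1], ?_⟩
    rw [add_smul, ← add_assoc]
    refine hK.mem_of_mem_fan ⟨?_, ?_⟩ fun s hs => ?_ <;> rw [hup]
    · nlinarith [hqF.1, sin_nonneg_of_mem_Icc (x := ω) ⟨hω.1.le, by linarith [hω.2, pi_pos]⟩]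
    · rw [sin_pi_div_two]; linarith [hqF.2]
    · have : ε ≤ suppGap K q s := hmin hs
      simp only [suppGap] at this
      nlinarith [sin_le_one s]
  linarith [hκmax hnext]

theorem isConnected_upperBoundary (hK : IsCap ω K) (hω : 0 ≤ ω) :
    IsConnected (upperBoundary ω K) := by
  refine (isConnected_Icc (by linarith [pi_pos])).biUnion_of_isCompact_graph
    (fun s _ => ⟨edge_nonempty hK.isCompact hK.nonempty s, (hK.convex.edge s).isPreconnected⟩)
    ((isCompact_Icc.prod hK.isCompact).of_isClosed_subset ?_ fun z hz => ⟨hz.1, hz.2.1⟩)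
  refine (isClosed_Icc.preimage continuous_fst).inter
    ((hK.isCompact.isClosed.preimage continuous_snd).inter (isClosed_eq ?_ ?_))
  · exact continuous_dotp_uvec
  · exact (continuous_suppFn hK.isCompact).comp continuous_fst

theorem isConnected_diff_niche (hK : IsCap ω K) (hω : ω ∈ Ioc 0 (π/2))
    (h : niche ω K ⊆ K \ upperBoundary ω K) : IsConnected (K \ niche ω K) := by
  have hB := hK.isConnected_upperBoundary hω.1.le
  have hBK : upperBoundary ω K ⊆ K := iUnion₂_subset fun _ _ => inter_subset_left
  have hB' : upperBoundary ω K ⊆ K \ niche ω K := fun q hq => ⟨hBK hq, fun hqN => (h hqN).2 hq⟩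
  obtain ⟨b, hb⟩ := hB.nonempty
  refine ⟨⟨b, hB' hb⟩, isPreconnected_of_forall b fun p hp => ?_⟩
  obtain ⟨κ, hκ, hκB⟩ := hK.exists_add_smul_mem_upperBoundary hω hp.1
  have hseg : segment ℝ p (p + κ • uvec (π/2)) ⊆ K \ niche ω K := by
    intro z hz
    refine ⟨hK.convex.segment_subset hp.1 (hBK hκB) hz, fun hzN => hp.2 ?_⟩
    rw [segment_eq_image'] at hz
    obtain ⟨θ, hθ, rfl⟩ := hz
    simp only [add_sub_cancel_left, smul_smul] at hzN
    exact mem_niche_of_add_smul_mem hω.2 (hK.subset_fan hp.1) (mul_nonneg hθ.1 hκ) hzN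
  exact ⟨_, union_subset hseg hB', Or.inr hb, Or.inl (left_mem_segment ℝ _ _),
    (convex_segment _ _).isPreconnected.union _ (right_mem_segment ℝ _ _) hκB hB.isPreconnected⟩

theorem innerCorner_mem_of_isConnected (hK : IsCap ω K) (hω : ω ∈ Ioc 0 (π/2))
    (hconn : IsConnected (K \ niche ω K)) (ht : t ∈ Ioo 0 ω)
    (hx : innerCorner K t ∈ interior (fan ω)) : innerCorner K t ∈ K := by
  by_contra hxK
  obtain ⟨s, hs, hlt⟩ :=
    hK.exists_suppFn_lt_dotp_innerCorner hω.2 ht (interior_subset hx) hxK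
  set A := {q : Pt | suppFn K t - 1 ≤ dotp q (uvec t)}
  set B := {q : Pt | suppFn K (t + π/2) - 1 ≤ dotp q (uvec (t + π/2))}
  have hcover : K \ niche ω K ⊆ A ∪ B := by
    rintro q ⟨hqK, hqN⟩
    by_contra hAB
    simp only [A, B, mem_union, mem_ofPred_eq, not_or, not_le] at hAB
    exact hqN (mem_niche_iff.2 ⟨hK.subset_fan hqK, t, ht, hAB.1, hAB.2⟩)
  have hA : (K \ niche ω K ∩ A).Nonempty := by
    obtain ⟨q, hq⟩ := edge_nonempty hK.isCompact hK.nonempty 0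
    refine ⟨q, ⟨hq.1, hK.notMem_niche_of_mem_edge hω.2 (Or.inl rfl) hq⟩, ?_⟩
    have := hK.suppGap_le_one_of_mem_edge_zero hω hq ht
    simp only [A, mem_ofPred_eq, suppGap] at this ⊢
    linarith
  have hB : (K \ niche ω K ∩ B).Nonempty := by
    obtain ⟨q, hq⟩ := edge_nonempty hK.isCompact hK.nonempty (ω + π/2)
    refine ⟨q, ⟨hq.1, hK.notMem_niche_of_mem_edge hω.2 (Or.inr rfl) hq⟩, ?_⟩
    have := hK.suppGap_le_one_of_mem_edge_top hω hq ht
    simp only [B, mem_ofPred_eq, suppGap] at this ⊢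
    linarith
  obtain ⟨q, ⟨hqK, -⟩, hqA, hqB⟩ := isPreconnected_closed_iff.1 hconn.2 A B
    (isClosed_le continuous_const (continuous_dotp_uvec_left t))
    (isClosed_le continuous_const (continuous_dotp_uvec_left (t + π/2))) hcover hA hB
  have hxq : dotp (innerCorner K t) (uvec s) ≤ dotp q (uvec s) :=
    dotp_uvec_le_of_le hs (by rwa [dotp_innerCorner_uvec]) (by rwa [dotp_innerCorner_uvec_add])
  exact (hlt.trans_le hxq).not_ge (dotp_le_suppFn hK.isCompact hqK s)

end IsCap

theorem stmt_4 (ω : ℝ) (hω : ω ∈ Ioc 0 (π/2)) (K : Set Pt) (hK : IsCap ω K) :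
    List.TFAE [niche ω K ⊆ K,
               niche ω K ⊆ K \ upperBoundary ω K,
               ∀ t ∈ Ioo 0 ω, innerCorner K t ∉ interior (fan ω) ∨ innerCorner K t ∈ K,
               IsConnected (K \ niche ω K)] := by
  tfae_have 2 → 1 := fun h _ hp => (h hp).1
  tfae_have 1 → 3 := fun h t ht => or_iff_not_imp_left.2 fun hx =>
    innerCorner_mem_of_niche_subset hK.isCompact.isClosed h ht (not_not.1 hx)
  tfae_have 3 → 2 := hK.niche_subset_diff_upperBoundary hω.2
  tfae_have 2 → 4 := hK.isConnected_diff_niche hω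
  tfae_have 4 → 3 := fun h t ht => or_iff_not_imp_left.2 fun hx =>
    hK.innerCorner_mem_of_isConnected hω h ht (not_not.1 hx)
  tfae_finish
end
end

section
/- Let ω ∈ (0, π/2) and let K and K' be caps with rotation angle ω whose Hausdorff distance is ε := d_H(K, K'). Then |w_K° − w_{K'}°| ≤ (1 + sec ω)·ε. -/
noncomputable section

open Real MeasureTheory Set Filter Topology

lemma dotp_inner (p q : Pt) : dotp p q = inner ℝ p q := by
  simp [dotp, PiLp.inner_apply, Fin.sum_univ_two, mul_comm]

lemma norm_uvec (t : ℝ) : ‖uvec t‖ = 1 := by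
  simp [EuclideanSpace.norm_eq, uvec, mk2, Fin.sum_univ_two]

lemma contDotp (u : Pt) : Continuous fun p : Pt => dotp p u := by
  simp only [dotp_inner]
  exact continuous_id.inner continuous_const

lemma le_suppFn {K : Set Pt} (hK : IsCompact K) {p : Pt} (hp : p ∈ K) (t : ℝ) :
    dotp p (uvec t) ≤ suppFn K t :=
  le_csSup ((hK.image (contDotp (uvec t))).bddAbove) ⟨p, hp, rfl⟩

lemma suppFn_le (K K' : Set Pt) (hK : IsConvexBody K) (hK' : IsConvexBody K') (t : ℝ) :
    suppFn K t ≤ suppFn K' t + Metric.hausdorffDist K K' := by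
  obtain ⟨hKne, hKc, -⟩ := hK
  obtain ⟨hK'ne, hK'c, -⟩ := hK'
  have hne : EMetric.hausdorffEdist K K' ≠ ⊤ :=
    Metric.hausdorffEdist_ne_top_of_nonempty_of_bounded hKne hK'ne hKc.isBounded hK'c.isBounded
  apply csSup_le (hKne.image _)
  rintro x ⟨p, hp, rfl⟩
  obtain ⟨q, hq, hdq⟩ := hK'c.exists_infDist_eq_dist hK'ne p
  have h1 : dotp (p - q) (uvec t) ≤ ‖p - q‖ := by
    rw [dotp_inner]
    calc (inner ℝ (p - q) (uvec t) : ℝ) ≤ ‖p - q‖ * ‖uvec t‖ := real_inner_le_norm _ _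
    _ = ‖p - q‖ := by rw [norm_uvec]; ring
  have h2 : dotp q (uvec t) ≤ suppFn K' t := le_suppFn hK'c hq t
  have h3 : dist p q ≤ Metric.hausdorffDist K K' := by
    rw [← hdq]; exact Metric.infDist_le_hausdorffDist_of_mem hp hne
  have h4 : dotp p (uvec t) = dotp (p - q) (uvec t) + dotp q (uvec t) := by
    simp [dotp]; ring
  rw [dist_eq_norm] at h3
  linarith

lemma abs_suppFn_sub (K K' : Set Pt) (hK : IsConvexBody K) (hK' : IsConvexBody K') (t : ℝ) :
    |suppFn K t - suppFn K' t| ≤ Metric.hausdorffDist K K' := by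
  rw [abs_le]
  have h1 := suppFn_le K K' hK hK' t
  have h2 := suppFn_le K' K hK' hK t
  rw [Metric.hausdorffDist_comm] at h2
  constructor <;> linarith

lemma wgap_eq (K : Set Pt) (t : ℝ) :
    wgap K t = suppFn K 0 - (suppFn K t - 1) / Real.cos t := by
  simp [wgap, vminus, Wpt, dotp, uvec, vvec, mk2, edge, suppLine]

lemma abs_dotp_le (p : Pt) (t : ℝ) : |dotp p (uvec t)| ≤ ‖p‖ := by
  rw [dotp_inner]
  calc |(inner ℝ p (uvec t) : ℝ)| ≤ ‖p‖ * ‖uvec t‖ := abs_real_inner_le_norm _ _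
  _ = ‖p‖ := by rw [norm_uvec, mul_one]

lemma abs_suppFn_le {K : Set Pt} (hK : IsConvexBody K) {R : ℝ}
    (hR : ∀ p ∈ K, ‖p‖ ≤ R) (t : ℝ) : |suppFn K t| ≤ R := by
  obtain ⟨hKne, hKc, -⟩ := hK
  obtain ⟨p₀, hp₀⟩ := hKne
  rw [abs_le]
  constructor
  · have h1 : -R ≤ dotp p₀ (uvec t) := by
      have h2 := (abs_le.1 (le_trans (abs_dotp_le p₀ t) (hR p₀ hp₀))).1
      linarith
    exact le_trans h1 (le_suppFn hKc hp₀ t)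
  · apply csSup_le (Set.Nonempty.image _ ⟨p₀, hp₀⟩)
    rintro x ⟨p, hp, rfl⟩
    exact (abs_le.1 (le_trans (abs_dotp_le p t) (hR p hp))).2

lemma csInf_diff_le {S : Set ℝ} (hS : S.Nonempty) {f g : ℝ → ℝ}
    (hfb : BddBelow (f '' S)) (hgb : BddBelow (g '' S)) {c : ℝ}
    (h : ∀ t ∈ S, |f t - g t| ≤ c) :
    |sInf (f '' S) - sInf (g '' S)| ≤ c := by
  rw [abs_le]
  constructor
  · have : sInf (g '' S) - c ≤ sInf (f '' S) := by
      apply le_csInf (hS.image f)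
      rintro b ⟨t, ht, rfl⟩
      have := csInf_le hgb (Set.mem_image_of_mem g ht)
      have := (abs_le.1 (h t ht)).1
      linarith
    linarith
  · have : sInf (f '' S) - c ≤ sInf (g '' S) := by
      apply le_csInf (hS.image g)
      rintro b ⟨t, ht, rfl⟩
      have := csInf_le hfb (Set.mem_image_of_mem f ht)
      have := (abs_le.1 (h t ht)).2
      linarith
    linarith

theorem stmt_10 (ω : ℝ) (hω : ω ∈ Ioo 0 (π/2)) (K K' : Set Pt)
    (hK : IsCap ω K) (hK' : IsCap ω K') :
    |wgapInf ω K - wgapInf ω K'| ≤ (1 + 1 / Real.cos ω) * Metric.hausdorffDist K K' := by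
  obtain ⟨hω0, hωπ⟩ := hω
  set ε := Metric.hausdorffDist K K' with hε
  have hεnn : 0 ≤ ε := Metric.hausdorffDist_nonneg
  have hcosω : 0 < Real.cos ω := Real.cos_pos_of_mem_Ioo ⟨by linarith [Real.pi_pos], hωπ⟩
  have hSne : (Ioo (0:ℝ) ω).Nonempty := ⟨ω/2, by constructor <;> linarith⟩
  have hcos : ∀ t ∈ Ioo (0:ℝ) ω, Real.cos ω ≤ Real.cos t ∧ 0 < Real.cos t := by
    intro t ht
    have h1 : Real.cos ω ≤ Real.cos t :=
      Real.cos_le_cos_of_nonneg_of_le_pi ht.1.le (by linarith [Real.pi_pos]) ht.2.le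
    exact ⟨h1, lt_of_lt_of_le hcosω h1⟩
  have hbdd : ∀ (L : Set Pt), IsCap ω L → BddBelow (wgap L '' Ioo 0 ω) := by
    intro L hL
    obtain ⟨R, hR⟩ := isBounded_iff_forall_norm_le.1 hL.1.2.1.isBounded
    refine ⟨suppFn L 0 - (R+1)/Real.cos ω, ?_⟩
    rintro x ⟨t, ht, rfl⟩
    rw [wgap_eq]
    obtain ⟨hc1, hc2⟩ := hcos t ht
    have h1 := abs_le.1 (abs_suppFn_le hL.1 hR t)
    have h2 : (suppFn L t - 1)/Real.cos t ≤ (R+1)/Real.cos ω :=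
      div_le_div₀ (by linarith) (by linarith) hcosω hc1
    linarith
  have hdiff : ∀ t ∈ Ioo (0:ℝ) ω, |wgap K t - wgap K' t| ≤ (1 + 1/Real.cos ω) * ε := by
    intro t ht
    obtain ⟨hc1, hc2⟩ := hcos t ht
    rw [wgap_eq, wgap_eq]
    have h0 := abs_suppFn_sub K K' hK.1 hK'.1 0
    have hti := abs_suppFn_sub K K' hK.1 hK'.1 t
    have hdiv : |(suppFn K t - 1)/Real.cos t - (suppFn K' t - 1)/Real.cos t| ≤ ε / Real.cos ω := by
      rw [div_sub_div_same, abs_div, abs_of_pos hc2]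
      have h3 : |suppFn K t - 1 - (suppFn K' t - 1)| ≤ ε := by
        have h4 : suppFn K t - 1 - (suppFn K' t - 1) = suppFn K t - suppFn K' t := by ring
        rw [h4]; exact hti
      exact div_le_div₀ hεnn h3 hcosω hc1
    have habs : |suppFn K 0 - (suppFn K t - 1) / Real.cos t -
        (suppFn K' 0 - (suppFn K' t - 1) / Real.cos t)| ≤
        |suppFn K 0 - suppFn K' 0| +
        |(suppFn K t - 1)/Real.cos t - (suppFn K' t - 1)/Real.cos t| := by
      have h5 : suppFn K 0 - (suppFn K t - 1) / Real.cos t -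
          (suppFn K' 0 - (suppFn K' t - 1) / Real.cos t) =
          (suppFn K 0 - suppFn K' 0) -
          ((suppFn K t - 1)/Real.cos t - (suppFn K' t - 1)/Real.cos t) := by ring
      rw [h5]
      exact abs_sub _ _
    have hring : ε + ε / Real.cos ω = (1 + 1/Real.cos ω) * ε := by ring
    linarith
  have hfin := csInf_diff_le hSne (hbdd K hK) (hbdd K' hK') hdiff
  simpa [wgapInf] using hfin
end
end
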